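/- Let p be an odd prime, w an integer with 1 ≤ w ≤ p−1, and β a primitive p²-th root of unity in the algebraic closure of F_2. (1) If 2 ∈ Q_{ℓ₀} for some ℓ₀ with 1 ≤ ℓ₀ ≤ p−1, then the set {n : 0 ≤ n < p², gcd(n,p) = 1, G^odd(β^n) = 0} is either empty or has exactly (p² − p)/2 elements. (2) If 2 ∈ N_{ℓ₀} for some ℓ₀ with 1 ≤ ℓ₀ ≤ p−1, then G^odd(β^n) ≠ 0 for all n with 0 ≤ n < p² and gcd(n,p) = 1. -/

import Mathlib

open Finset
open scoped Classical

noncomputable section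

/-- The Fermat quotient `q_p(u)`: for `gcd(u,p)=1` the unique integer in `[0,p-1]`
congruent to `(u^(p-1)-1)/p` mod `p`, and `0` when `p ∣ u`. -/
def fermatQuot (p u : ℕ) : ℕ :=
  if p ∣ u then 0 else ((u ^ (p - 1) - 1) / p) % p

/-- The polynomial quotient `q_{p,w}(u)`: the unique integer in `[0,p-1]`
congruent to `(u^w - u^(w*p))/p` mod `p`. -/
def polyQuot (p w u : ℕ) : ℤ :=
  (((u : ℤ) ^ w - (u : ℤ) ^ (w * p)) / (p : ℤ)) % (p : ℤ)

/-- The binary sequence `(f_u)`: `f_u = 0` iff the Legendre symbol of `q_{p,w}(u)`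
is `1` or `q_{p,w}(u) = 0`. -/
def legSeq (p : ℕ) [Fact p.Prime] (w : ℕ) (u : ℕ) : ZMod 2 :=
  if legendreSym p (polyQuot p w u) = 1 ∨ polyQuot p w u = 0 then 0 else 1

/-- The linear complexity of a binary sequence: the least order `L` of a linear
recurrence `s_{u+L} = c_{L-1} s_{u+L-1} + ⋯ + c_0 s_u` with `c_0 = 1` satisfied by `s`. -/
def linearComplexity (s : ℕ → ZMod 2) : ℕ :=
  sInf {L : ℕ | ∃ c : Fin L → ZMod 2,
    (∀ h : 0 < L, c ⟨0, h⟩ = 1) ∧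
    ∀ u : ℕ, s (u + L) = ∑ i : Fin L, c i * s (u + (i : ℕ))}

/-- The map `H_w : u ↦ -w q_p(u) mod p` for `gcd(u,p)=1`, `0` if `p ∣ u` and `w ≥ 2`,
and `k mod p` if `u ≡ kp (mod p²)` and `w = 1`. -/
def Hquot (p w u : ℕ) : ZMod p :=
  if p ∣ u then (if w = 1 then ((u / p : ℕ) : ZMod p) else 0)
  else -(w : ZMod p) * ((fermatQuot p u : ℕ) : ZMod p)

/-- `D_l = {u : 0 ≤ u < p², gcd(u,p) = 1, H_w(u) ≡ l (mod p)}`. -/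
def Dset (p w : ℕ) (l : ZMod p) : Finset ℕ :=
  (Finset.range (p ^ 2)).filter fun u => Nat.Coprime u p ∧ Hquot p w u = l

/-- `Q_l = {u ∈ D_l : (u/p) = 1}`. -/
def Qset (p : ℕ) [Fact p.Prime] (w : ℕ) (l : ZMod p) : Finset ℕ :=
  (Dset p w l).filter fun u => legendreSym p u = 1

/-- `N_l = {u ∈ D_l : (u/p) = -1}`. -/
def Nset (p : ℕ) [Fact p.Prime] (w : ℕ) (l : ZMod p) : Finset ℕ :=
  (Dset p w l).filter fun u => legendreSym p u = -1

/-- The quadratic residues modulo `p` in `{1,…,p-1}`. -/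
def QRes (p : ℕ) [Fact p.Prime] : Finset ℕ :=
  (Finset.Ico 1 p).filter fun l => legendreSym p l = 1

/-- The quadratic non-residues modulo `p` in `{1,…,p-1}`. -/
def QNR (p : ℕ) [Fact p.Prime] : Finset ℕ :=
  (Finset.Ico 1 p).filter fun l => legendreSym p l = -1

/-- Evaluation of `G^odd(x) = Σ_{l∈N} D_l(x) + Σ_{l=1}^{p-1} N_l(x)` at a point of the
algebraic closure of `F_2`. -/
def GoddEval (p : ℕ) [Fact p.Prime] (w : ℕ) (x : AlgebraicClosure (ZMod 2)) :
    AlgebraicClosure (ZMod 2) :=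
  (∑ l ∈ QNR p, ∑ u ∈ Dset p w (l : ZMod p), x ^ u)
    + ∑ l ∈ Finset.Ico 1 p, ∑ u ∈ Nset p w (l : ZMod p), x ^ u

/-- Evaluation of `G^one(x) = Σ_{l∈N} D_l(x) + Σ_{l=1}^{p-1} N_l(x) + Σ_{l∈N} x^{lp}`. -/
def GoneEval (p : ℕ) [Fact p.Prime] (w : ℕ) (x : AlgebraicClosure (ZMod 2)) :
    AlgebraicClosure (ZMod 2) :=
  GoddEval p w x + ∑ l ∈ QNR p, x ^ (l * p)

/-!
Fermat quotients are logarithmic on units modulo `p²`, so `H_w` is additive there, and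
multiplication by a unit `v` carries `D_l` onto `D_{l + H_w(v)}` while multiplying Legendre
symbols by `(v/p)`. Hence `G^odd(β^n)` only depends on the pair `(H_w(n), (n/p))`, and in
characteristic `2` also `G^odd(β^{2n}) = G^odd(β^n)²`. A zero is thus propagated along the
translates of the pair by multiples of `(H_w(2), (2/p)) = (ℓ₀, ±1)`: to every unit with the
same Legendre symbol, and to every unit when `(2/p) = -1`. Vanishing at every unit is
impossible: `G^odd` would be divisible by `Φ_{p²} = (X^{p²} - 1)/(X^p - 1)`, forcing equal
coefficients at `1` and `1 + kp`, but these are `0` and `1` when `H_w(1 + kp) = wk` is a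
non-residue.
-/

lemma mem_Dset {p w : ℕ} {l : ZMod p} {u : ℕ} :
    u ∈ Dset p w l ↔ u < p ^ 2 ∧ u.Coprime p ∧ Hquot p w u = l := by
  simp [Dset]

lemma intCast_eq_of_sq_dvd_mul_sub {n : ℕ} (hn : n ≠ 0) {a b : ℤ}
    (h : (n : ℤ) ^ 2 ∣ n * a - n * b) : (a : ZMod n) = b := by
  rw [ZMod.intCast_eq_intCast_iff_dvd_sub, ← dvd_neg, neg_sub]
  rw [sq, ← mul_sub] at h
  exact (mul_dvd_mul_iff_left (by exact_mod_cast hn)).mp h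

lemma mul_mod_mul_mod_eq_self {n u v v' : ℕ} (hu : u < n) (h : v * v' % n = 1) :
    u * v % n * v' % n = u := by
  rw [Nat.mod_mul_mod, mul_assoc, Nat.mul_mod, h, mul_one, Nat.mod_mod, Nat.mod_eq_of_lt hu]

section FermatQuotient

variable {p : ℕ} [hp : Fact p.Prime]

lemma coprime_iff_natCast_ne_zero {u : ℕ} : u.Coprime p ↔ (u : ZMod p) ≠ 0 := by
  rw [Ne, ZMod.natCast_eq_zero_iff, Nat.coprime_comm, hp.out.coprime_iff_not_dvd]

lemma natCast_ne_zero_of_mem_Ico {l : ℕ} (hl : l ∈ Ico 1 p) : (l : ZMod p) ≠ 0 := by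
  rw [mem_Ico] at hl
  rw [Ne, ZMod.natCast_eq_zero_iff]
  exact Nat.not_dvd_of_pos_of_lt hl.1 hl.2

lemma coprime_two (hodd : p ≠ 2) : (2 : ℕ).Coprime p :=
  (Nat.coprime_primes Nat.prime_two hp.out).mpr hodd.symm

lemma coprime_one_add_mul (k : ℕ) : (1 + k * p).Coprime p := by
  rw [coprime_iff_natCast_ne_zero]
  simp

lemma natCast_mod_sq (u : ℕ) : ((u % p ^ 2 : ℕ) : ZMod p) = u := by
  rw [← ZMod.natCast_mod (u % p ^ 2) p, Nat.mod_mod_of_dvd _ (dvd_pow_self p two_ne_zero),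
    ZMod.natCast_mod]

lemma coprime_mod_sq {u : ℕ} (hu : u.Coprime p) : (u % p ^ 2).Coprime p := by
  rwa [coprime_iff_natCast_ne_zero, natCast_mod_sq, ← coprime_iff_natCast_ne_zero]

lemma sq_dvd_pow_sub_one_sub_fermatQuot {u : ℕ} (hu : u.Coprime p) :
    (p : ℤ) ^ 2 ∣ (u : ℤ) ^ (p - 1) - 1 - p * fermatQuot p u := by
  have hfermat : 1 ≡ u ^ (p - 1) [MOD p] := by
    simpa [Nat.totient_prime hp.out] using (Nat.ModEq.pow_totient hu).symm
  have hone : 1 ≤ u ^ (p - 1) :=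
    Nat.one_le_pow _ _ (Nat.pos_of_ne_zero fun h => by simp_all [hp.out.one_lt.ne'])
  obtain ⟨t, ht⟩ := (Nat.modEq_iff_dvd' hone).mp hfermat
  have hcast : (u : ℤ) ^ (p - 1) - 1 = p * t := by
    have := congrArg (Nat.cast : ℕ → ℤ) ht
    push_cast [hone] at this
    exact this
  rw [fermatQuot, if_neg (hp.out.coprime_iff_not_dvd.mp hu.symm), ht,
    Nat.mul_div_cancel_left _ hp.out.pos, hcast]
  refine ⟨t / p, ?_⟩
  have := Nat.div_add_mod t p
  zify at this
  push_cast
  linear_combination (p : ℤ) * this.symm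

lemma fermatQuot_eq_of_sq_dvd {u : ℕ} (hu : u.Coprime p) {a : ℤ}
    (h : (p : ℤ) ^ 2 ∣ (u : ℤ) ^ (p - 1) - 1 - p * a) : (fermatQuot p u : ZMod p) = a := by
  have h' : (p : ℤ) ^ 2 ∣ p * fermatQuot p u - p * a := by
    rw [show (p : ℤ) * fermatQuot p u - p * a
        = ((u : ℤ) ^ (p - 1) - 1 - p * a)
          - ((u : ℤ) ^ (p - 1) - 1 - p * fermatQuot p u) by ring]
    exact dvd_sub h (sq_dvd_pow_sub_one_sub_fermatQuot hu)
  simpa using intCast_eq_of_sq_dvd_mul_sub hp.out.ne_zero h'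

lemma fermatQuot_mul {u v : ℕ} (hu : u.Coprime p) (hv : v.Coprime p) :
    (fermatQuot p (u * v) : ZMod p) = fermatQuot p u + fermatQuot p v := by
  obtain ⟨s, hs⟩ := sq_dvd_pow_sub_one_sub_fermatQuot hu
  obtain ⟨t, ht⟩ := sq_dvd_pow_sub_one_sub_fermatQuot hv
  set a : ℤ := (fermatQuot p u : ℤ)
  set b : ℤ := (fermatQuot p v : ℤ)
  have key : (p : ℤ) ^ 2 ∣ ((u * v : ℕ) : ℤ) ^ (p - 1) - 1 - p * (a + b) := by
    refine ⟨s + t + a * b + p * (a * t + s * b) + p ^ 2 * s * t, ?_⟩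
    rw [Nat.cast_mul, mul_pow]
    linear_combination ((u : ℤ) ^ (p - 1)) * ht + (1 + p * b + p ^ 2 * t) * hs
  simpa [a, b] using fermatQuot_eq_of_sq_dvd (Nat.Coprime.mul_left hu hv) key

lemma fermatQuot_mod_sq {u : ℕ} (hu : u.Coprime p) :
    (fermatQuot p (u % p ^ 2) : ZMod p) = fermatQuot p u := by
  have hmod : ((u % p ^ 2 : ℕ) : ℤ) ≡ u [ZMOD (p : ℤ) ^ 2] := by
    push_cast
    exact Int.mod_modEq _ _
  have key :
      (p : ℤ) ^ 2 ∣ ((u % p ^ 2 : ℕ) : ℤ) ^ (p - 1) - 1 - p * (fermatQuot p u : ℤ) := by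
    rw [show ((u % p ^ 2 : ℕ) : ℤ) ^ (p - 1) - 1 - p * (fermatQuot p u : ℤ)
        = ((u : ℤ) ^ (p - 1) - 1 - p * fermatQuot p u)
          + (((u % p ^ 2 : ℕ) : ℤ) ^ (p - 1) - (u : ℤ) ^ (p - 1)) by ring]
    exact dvd_add (sq_dvd_pow_sub_one_sub_fermatQuot hu) (hmod.symm.pow (p - 1)).dvd
  simpa using fermatQuot_eq_of_sq_dvd (coprime_mod_sq hu) key

lemma fermatQuot_one_add_mul (k : ℕ) : (fermatQuot p (1 + k * p) : ZMod p) = -k := by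
  have hbinom := sq_dvd_add_pow_sub_sub ((k : ℤ) * p) 1 (p - 1)
  have hp1 : ((p - 1 : ℕ) : ℤ) = p - 1 := by push_cast [hp.out.one_le]; ring
  have key : (p : ℤ) ^ 2 ∣ ((1 + k * p : ℕ) : ℤ) ^ (p - 1) - 1 - p * (-k) := by
    have h := dvd_add ((pow_dvd_pow_of_dvd (dvd_mul_left (p : ℤ) k) 2).trans hbinom)
      (Dvd.intro (k : ℤ) rfl)
    rw [hp1, one_pow, one_pow, one_mul] at h
    rw [show ((1 + k * p : ℕ) : ℤ) ^ (p - 1) - 1 - p * (-k : ℤ)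
        = (1 + k * p) ^ (p - 1) - k * p * (p - 1) - 1 + p ^ 2 * k by push_cast; ring]
    exact h
  simpa using fermatQuot_eq_of_sq_dvd (coprime_one_add_mul k) key

end FermatQuotient

section UnitsModSq

variable {p : ℕ} [hp : Fact p.Prime] {w : ℕ}

lemma Hquot_of_coprime {u : ℕ} (hu : u.Coprime p) :
    Hquot p w u = -(w : ZMod p) * fermatQuot p u := by
  rw [Hquot, if_neg (hp.out.coprime_iff_not_dvd.mp hu.symm)]

lemma Hquot_mul_mod_sq {u v : ℕ} (hu : u.Coprime p) (hv : v.Coprime p) :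
    Hquot p w (u * v % p ^ 2) = Hquot p w u + Hquot p w v := by
  rw [Hquot_of_coprime (coprime_mod_sq (Nat.Coprime.mul_left hu hv)), Hquot_of_coprime hu,
    Hquot_of_coprime hv, fermatQuot_mod_sq (Nat.Coprime.mul_left hu hv), fermatQuot_mul hu hv,
    mul_add]

lemma Hquot_one_add_mul (k : ℕ) : Hquot p w (1 + k * p) = w * k := by
  rw [Hquot_of_coprime (coprime_one_add_mul k), fermatQuot_one_add_mul, neg_mul_neg]

lemma Hquot_one : Hquot p w 1 = 0 := by
  simpa using Hquot_one_add_mul (p := p) (w := w) 0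

lemma legendreSym_natCast_congr {a b : ℕ} (h : (a : ZMod p) = b) :
    legendreSym p a = legendreSym p b := by
  simp only [legendreSym, Int.cast_natCast, h]

lemma legendreSym_mul_mod_sq (u v : ℕ) :
    legendreSym p (u * v % p ^ 2 : ℕ) = legendreSym p u * legendreSym p v := by
  rw [legendreSym_natCast_congr (natCast_mod_sq (u * v)), Nat.cast_mul, legendreSym.mul]

lemma legendreSym_eq_one_or_neg_one {u : ℕ} (hu : u.Coprime p) :
    legendreSym p u = 1 ∨ legendreSym p u = -1 :=
  legendreSym.eq_one_or_neg_one p (by simpa [coprime_iff_natCast_ne_zero] using hu)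

lemma legendreSym_mul_self {u : ℕ} (hu : u.Coprime p) :
    legendreSym p u * legendreSym p u = 1 := by
  rcases legendreSym_eq_one_or_neg_one hu with h | h <;> rw [h] <;> norm_num

lemma exists_mul_mod_sq_eq_one {v : ℕ} (hv : v.Coprime p) :
    ∃ v', v * v' % p ^ 2 = 1 ∧ v'.Coprime p ∧ Hquot p w v' = -Hquot p w v ∧
      legendreSym p v' = legendreSym p v := by
  obtain ⟨v', -, hvv'⟩ := Nat.exists_mul_mod_eq_one_of_coprime (hv.pow_right 2)
    (Nat.one_lt_pow two_ne_zero hp.out.one_lt)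
  have hv' : v'.Coprime p := by
    have := natCast_mod_sq (p := p) (v * v')
    rw [hvv', Nat.cast_one, Nat.cast_mul] at this
    exact coprime_iff_natCast_ne_zero.mpr (right_ne_zero_of_mul_eq_one this.symm)
  refine ⟨v', hvv', hv', ?_, ?_⟩
  · have := Hquot_mul_mod_sq (w := w) hv hv'
    rw [hvv', Hquot_one] at this
    linear_combination -this
  · have := legendreSym_mul_mod_sq (p := p) v v'
    rw [hvv', Nat.cast_one, legendreSym.at_one] at this
    linear_combination -legendreSym p v' * legendreSym_mul_self hv - legendreSym p v * this

def unitsWith (p w : ℕ) [Fact p.Prime] (P : ZMod p → ℤ → Prop) : Finset ℕ :=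
  (range (p ^ 2)).filter fun u => u.Coprime p ∧ P (Hquot p w u) (legendreSym p u)

lemma mem_unitsWith {P : ZMod p → ℤ → Prop} {u : ℕ} :
    u ∈ unitsWith p w P ↔ u < p ^ 2 ∧ u.Coprime p ∧ P (Hquot p w u) (legendreSym p u) := by
  simp [unitsWith]

lemma unitsWith_congr {P Q : ZMod p → ℤ → Prop}
    (h : ∀ k ε, (ε = 1 ∨ ε = -1) → (P k ε ↔ Q k ε)) :
    unitsWith p w P = unitsWith p w Q := by
  ext u
  simp only [mem_unitsWith]
  exact ⟨fun ⟨hlt, hu, hP⟩ => ⟨hlt, hu, (h _ _ (legendreSym_eq_one_or_neg_one hu)).mp hP⟩,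
    fun ⟨hlt, hu, hQ⟩ => ⟨hlt, hu, (h _ _ (legendreSym_eq_one_or_neg_one hu)).mpr hQ⟩⟩

lemma sum_unitsWith_mul_mod {M : Type*} [AddCommMonoid M] (F : ℕ → M) {v : ℕ}
    (hv : v.Coprime p) (P : ZMod p → ℤ → Prop) :
    ∑ u ∈ unitsWith p w P, F (u * v % p ^ 2) =
      ∑ u ∈ unitsWith p w (fun k ε => P (k - Hquot p w v) (ε * legendreSym p v)), F u := by
  obtain ⟨v', hvv', hv', hH, hχ⟩ := exists_mul_mod_sq_eq_one (w := w) hv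
  have hv'v : v' * v % p ^ 2 = 1 := by rwa [mul_comm]
  have hpos : 0 < p ^ 2 := pow_pos hp.out.pos 2
  refine sum_nbij' (· * v % p ^ 2) (· * v' % p ^ 2) ?_ ?_ ?_ ?_ fun _ _ => rfl
  · intro u hu
    obtain ⟨-, hu, hP⟩ := mem_unitsWith.mp hu
    refine mem_unitsWith.mpr ⟨Nat.mod_lt _ hpos, coprime_mod_sq (hu.mul_left hv), ?_⟩
    rwa [Hquot_mul_mod_sq hu hv, legendreSym_mul_mod_sq, add_sub_cancel_right, mul_assoc,
      legendreSym_mul_self hv, mul_one]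
  · intro u hu
    obtain ⟨-, hu, hP⟩ := mem_unitsWith.mp hu
    refine mem_unitsWith.mpr ⟨Nat.mod_lt _ hpos, coprime_mod_sq (hu.mul_left hv'), ?_⟩
    rwa [Hquot_mul_mod_sq hu hv', legendreSym_mul_mod_sq, hH, hχ, ← sub_eq_add_neg]
  · intro u hu
    exact mul_mod_mul_mod_eq_self (mem_unitsWith.mp hu).1 hvv'
  · intro u hu
    exact mul_mod_mul_mod_eq_self (mem_unitsWith.mp hu).1 hv'v

end UnitsModSq

section LegendreClasses

variable {p : ℕ} [hp : Fact p.Prime] {w : ℕ}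

lemma exists_mem_QNR (hodd : p ≠ 2) : ∃ c, c ∈ QNR p := by
  obtain ⟨a, ha⟩ := FiniteField.exists_nonsquare (F := ZMod p) (by rwa [ZMod.ringChar_zmod_n])
  have ha0 : a ≠ 0 := by rintro rfl; exact ha ⟨0, by ring⟩
  have hmem : a.val ∈ Ico 1 p :=
    mem_Ico.mpr ⟨Nat.pos_of_ne_zero ((ZMod.val_ne_zero a).mpr ha0), ZMod.val_lt a⟩
  refine ⟨a.val, mem_filter.mpr ⟨hmem, ?_⟩⟩
  rwa [legendreSym.eq_neg_one_iff', ZMod.natCast_zmod_val]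

lemma coprime_of_mem_QNR {c : ℕ} (hc : c ∈ QNR p) : c.Coprime p :=
  coprime_iff_natCast_ne_zero.mpr (natCast_ne_zero_of_mem_Ico (mem_filter.mp hc).1)

lemma card_unitsWith_legendreSym (hodd : p ≠ 2) {ε : ℤ} (hε : ε = 1 ∨ ε = -1) :
    #(unitsWith p w fun _ e => e = ε) = (p ^ 2 - p) / 2 := by
  have hdisj : Disjoint (unitsWith p w fun _ e => e = 1) (unitsWith p w fun _ e => e = -1) :=
    disjoint_left.mpr fun u h1 h2 => by
      rw [mem_unitsWith] at h1 h2
      rw [h1.2.2] at h2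
      exact absurd h2.2.2 (by norm_num)
  have hunion : (unitsWith p w fun _ e => e = 1) ∪ (unitsWith p w fun _ e => e = -1)
      = (range (p ^ 2)).filter (p ^ 2).Coprime := by
    ext u
    have hcop : (p ^ 2).Coprime u ↔ u.Coprime p := by
      rw [Nat.coprime_pow_left_iff two_pos, Nat.coprime_comm]
    simp only [mem_union, mem_unitsWith, mem_filter, mem_range, hcop]
    have := @legendreSym_eq_one_or_neg_one p _ u
    tauto
  have htotal : #(unitsWith p w fun _ e => e = 1) + #(unitsWith p w fun _ e => e = -1)
      = p ^ 2 - p := by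
    rw [← card_union_of_disjoint hdisj, hunion, ← Nat.totient_eq_card_coprime,
      Nat.totient_prime_pow hp.out two_pos]
    simp [sq, Nat.mul_sub_one]
  have hswap : #(unitsWith p w fun _ e => e = 1) = #(unitsWith p w fun _ e => e = -1) := by
    obtain ⟨c, hc⟩ := exists_mem_QNR hodd
    have := sum_unitsWith_mul_mod (w := w) (fun _ => 1) (coprime_of_mem_QNR hc) fun _ e => e = 1
    rw [(mem_filter.mp hc).2] at this
    simpa [neg_eq_iff_eq_neg] using this
  rcases hε with rfl | rfl <;> omega

lemma unitsWith_legendreSym_eq_empty_or_card (hodd : p ≠ 2) {Z : ℤ → Prop}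
    (hZ : ¬ (Z 1 ∧ Z (-1))) :
    unitsWith p w (fun _ e => Z e) = ∅ ∨
      #(unitsWith p w fun _ e => Z e) = (p ^ 2 - p) / 2 := by
  have hcongr (Q : ℤ → Prop) (hQ : (Z 1 ↔ Q 1) ∧ (Z (-1) ↔ Q (-1))) :
      unitsWith p w (fun _ e => Z e) = unitsWith p w fun _ e => Q e :=
    unitsWith_congr fun _ e he => by rcases he with rfl | rfl <;> simp only [hQ]
  by_cases h1 : Z 1 <;> by_cases h2 : Z (-1)
  · exact absurd ⟨h1, h2⟩ hZ
  · rw [hcongr (· = 1) (by simp [h1, h2])]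
    exact Or.inr (card_unitsWith_legendreSym hodd (Or.inl rfl))
  · rw [hcongr (· = -1) (by simp [h1, h2])]
    exact Or.inr (card_unitsWith_legendreSym hodd (Or.inr rfl))
  · rw [hcongr (fun _ => False) (by simp [h1, h2])]
    exact Or.inl (by simp [unitsWith])

end LegendreClasses

section Twisted

variable {p : ℕ} [hp : Fact p.Prime] {w : ℕ} {K : Type*} [CommSemiring K]

def twistedEval (p w : ℕ) [Fact p.Prime] (x : K) (t : ZMod p) (ε : ℤ) : K :=
  (∑ l ∈ QNR p, ∑ u ∈ unitsWith p w (fun k _ => k - t = l), x ^ u)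
    + ∑ l ∈ Ico 1 p, ∑ u ∈ unitsWith p w (fun k e => k - t = l ∧ e * ε = -1), x ^ u

lemma twistedEval_zero_one (x : AlgebraicClosure (ZMod 2)) :
    twistedEval p w x 0 1 = GoddEval p w x := by
  simp only [twistedEval, GoddEval, sub_zero, mul_one]
  congr 1
  · refine sum_congr rfl fun l _ => sum_congr ?_ fun _ _ => rfl
    ext u
    simp [mem_unitsWith, Dset]
  · refine sum_congr rfl fun l _ => sum_congr ?_ fun _ _ => rfl
    ext u
    simp [mem_unitsWith, Nset, Dset, and_assoc]

lemma twistedEval_pow {x : K} (hx : x ^ p ^ 2 = 1) {v : ℕ} (hv : v.Coprime p)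
    (t : ZMod p) (ε : ℤ) :
    twistedEval p w (x ^ v) t ε = twistedEval p w x (Hquot p w v + t) (legendreSym p v * ε) := by
  have hpow (u : ℕ) : (x ^ v) ^ u = x ^ (u * v % p ^ 2) := by
    rw [← pow_eq_pow_mod _ hx, ← pow_mul, mul_comm]
  simp only [twistedEval, hpow, sum_unitsWith_mul_mod _ hv, sub_sub, mul_assoc]

lemma twistedEval_sq [CharP K 2] (x : K) (t : ZMod p) (ε : ℤ) :
    twistedEval p w (x ^ 2) t ε = twistedEval p w x t ε ^ 2 := by
  simp only [twistedEval, add_pow_char, sum_pow_char, ← pow_mul, mul_comm]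

lemma twistedEval_Hquot_two_add [CharP K 2] {x : K} (hx : x ^ p ^ 2 = 1) (hodd : p ≠ 2)
    (t : ZMod p) (ε : ℤ) :
    twistedEval p w x (Hquot p w 2 + t) (legendreSym p 2 * ε) = twistedEval p w x t ε ^ 2 := by
  rw [← twistedEval_sq, twistedEval_pow hx (coprime_two hodd), Nat.cast_ofNat]

lemma twistedEval_eq_zero_of_eq_zero [CharP K 2] {x : K} (hx : x ^ p ^ 2 = 1) (hodd : p ≠ 2)
    (hH2 : Hquot p w 2 ≠ 0) {t : ZMod p} {ε : ℤ} (h0 : twistedEval p w x t ε = 0)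
    (t' : ZMod p) : twistedEval p w x t' ε = 0 := by
  have hχ2 : legendreSym p 2 * legendreSym p 2 = 1 := by
    simpa using legendreSym_mul_self (coprime_two hodd)
  have step (k : ZMod p) (hk : twistedEval p w x k ε = 0) :
      twistedEval p w x (2 * Hquot p w 2 + k) ε = 0 := by
    calc twistedEval p w x (2 * Hquot p w 2 + k) ε
        = twistedEval p w x (Hquot p w 2 + (Hquot p w 2 + k))
            (legendreSym p 2 * (legendreSym p 2 * ε)) := by
          rw [← mul_assoc, hχ2, one_mul, ← add_assoc, ← two_mul]
      _ = (twistedEval p w x k ε ^ 2) ^ 2 := by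
          rw [twistedEval_Hquot_two_add hx hodd, twistedEval_Hquot_two_add hx hodd]
      _ = 0 := by rw [hk]; norm_num
  have hiter (j : ℕ) : twistedEval p w x (j * (2 * Hquot p w 2) + t) ε = 0 := by
    induction j with
    | zero => simpa using h0
    | succ j ih => simpa [add_mul, add_comm, add_left_comm, add_assoc] using step _ ih
  have h2ne : (2 : ZMod p) * Hquot p w 2 ≠ 0 :=
    mul_ne_zero (by exact_mod_cast coprime_iff_natCast_ne_zero.mp (coprime_two hodd)) hH2
  simpa [div_mul_cancel₀ _ h2ne] using hiter ((t' - t) / (2 * Hquot p w 2)).val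

lemma GoddEval_pow {x : AlgebraicClosure (ZMod 2)} (hx : x ^ p ^ 2 = 1) {n : ℕ}
    (hn : n.Coprime p) :
    GoddEval p w (x ^ n) = twistedEval p w x (Hquot p w n) (legendreSym p n) := by
  rw [← twistedEval_zero_one, twistedEval_pow hx hn, add_zero, mul_one]

end Twisted

namespace Polynomial

lemma cyclotomic_dvd_of_forall_isPrimitiveRoot {K L : Type*} [Field K] [Field L] [Algebra K L]
    {n : ℕ} {β : L} (hβ : IsPrimitiveRoot β n) {f : K[X]}
    (hf : ∀ μ : L, IsPrimitiveRoot μ n → aeval μ f = 0) : cyclotomic n K ∣ f := by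
  have hroots : ∀ μ ∈ primitiveRoots n L, X - C μ ∣ f.map (algebraMap K L) := by
    intro μ hμ
    rw [dvd_iff_isRoot, IsRoot, eval_map_algebraMap,
      hf μ (isPrimitiveRoot_of_mem_primitiveRoots hμ)]
  have hprod := prod_dvd_of_coprime (s := fun μ : L => X - C μ)
    (fun _ _ _ _ hne => pairwise_coprime_X_sub_C (K := L) Function.injective_id hne) hroots
  rw [← cyclotomic_eq_prod_X_sub_primitiveRoots hβ, ← map_cyclotomic n (algebraMap K L)]
    at hprod
  exact (map_dvd_map' _).mp hprod

lemma coeff_add_mul_eq_of_cyclotomic_dvd {R : Type*} [CommRing R] [IsDomain R] (p k : ℕ)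
    [hp : Fact p.Prime] {f : R[X]} (hf : cyclotomic (p ^ (k + 1)) R ∣ f)
    (hdeg : f.natDegree < p ^ (k + 1)) {m j : ℕ} (hm : m + j * p ^ k < p ^ (k + 1)) :
    f.coeff (m + j * p ^ k) = f.coeff m := by
  obtain ⟨g, rfl⟩ := hf
  have hg : g.natDegree < p ^ k := by
    rcases eq_or_ne g 0 with rfl | hg0
    · simp [pow_pos hp.out.pos]
    rw [natDegree_mul (cyclotomic_ne_zero _ R) hg0, natDegree_cyclotomic,
      Nat.totient_prime_pow_succ hp.out] at hdeg
    have : p ^ k * (p - 1) + p ^ k = p ^ (k + 1) := by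
      rw [← Nat.mul_succ, Nat.succ_eq_add_one, Nat.sub_add_cancel hp.out.one_le, pow_succ]
    omega
  have step (m : ℕ) (hm : m + p ^ k < p ^ (k + 1)) :
      (cyclotomic (p ^ (k + 1)) R * g).coeff (m + p ^ k)
        = (cyclotomic (p ^ (k + 1)) R * g).coeff m := by
    have hprod : cyclotomic (p ^ (k + 1)) R * g * (X ^ p ^ k - 1)
        = g * (X ^ p ^ (k + 1) - 1) := by
      rw [mul_right_comm, cyclotomic_prime_pow_mul_X_pow_sub_one, mul_comm]
    have := congrArg (coeff · (m + p ^ k)) hprod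
    simp only [mul_sub, mul_one, coeff_sub, coeff_mul_X_pow] at this
    rw [coeff_mul_X_pow', if_neg (by omega), coeff_eq_zero_of_natDegree_lt (p := g) (by omega)]
      at this
    linear_combination -this
  induction j with
  | zero => simp
  | succ j ih =>
    rw [add_mul, one_mul] at hm ⊢
    rw [← add_assoc, step _ (by omega), ih (by omega)]

end Polynomial

section GoddPoly

open Polynomial

variable {p : ℕ} [hp : Fact p.Prime] {w : ℕ}

def GoddPoly (p w : ℕ) [Fact p.Prime] : (ZMod 2)[X] :=
  (∑ l ∈ QNR p, ∑ u ∈ Dset p w l, X ^ u) + ∑ l ∈ Ico 1 p, ∑ u ∈ Nset p w l, X ^ u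

lemma aeval_GoddPoly (x : AlgebraicClosure (ZMod 2)) :
    aeval x (GoddPoly p w) = GoddEval p w x := by
  simp [GoddPoly, GoddEval]

lemma coeff_GoddPoly (m : ℕ) :
    (GoddPoly p w).coeff m = (∑ l ∈ QNR p, if m ∈ Dset p w l then 1 else 0)
      + ∑ l ∈ Ico 1 p, if m ∈ Nset p w l then 1 else 0 := by
  simp [GoddPoly, coeff_X_pow]

lemma notMem_Nset_of_legendreSym_eq_one {l : ZMod p} {u : ℕ} (hu : legendreSym p u = 1) :
    u ∉ Nset p w l := fun h => by
  rw [Nset, mem_filter, hu] at h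
  exact absurd h.2 (by norm_num)

lemma natDegree_GoddPoly_lt : (GoddPoly p w).natDegree < p ^ 2 := by
  have hpos : 0 < p ^ 2 := pow_pos hp.out.pos 2
  suffices (GoddPoly p w).natDegree ≤ p ^ 2 - 1 by omega
  refine natDegree_le_iff_coeff_eq_zero.mpr fun m hm => ?_
  have hD (l : ZMod p) : m ∉ Dset p w l := fun h => by have := (mem_Dset.mp h).1; omega
  simp [coeff_GoddPoly, hD, Nset]

lemma coeff_GoddPoly_one : (GoddPoly p w).coeff 1 = 0 := by
  rw [coeff_GoddPoly, sum_eq_zero, sum_eq_zero, add_zero]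
  · exact fun l _ => if_neg (notMem_Nset_of_legendreSym_eq_one (by simp))
  · intro l hl
    refine if_neg fun h => natCast_ne_zero_of_mem_Ico (mem_filter.mp hl).1 ?_
    rw [← (mem_Dset.mp h).2.2, Hquot_one]

lemma exists_coeff_GoddPoly_one_add_mul (hodd : p ≠ 2) (hw1 : 1 ≤ w) (hw2 : w ≤ p - 1) :
    ∃ k < p, (GoddPoly p w).coeff (1 + k * p) = 1 := by
  obtain ⟨c, hc⟩ := exists_mem_QNR hodd
  have hw : (w : ZMod p) ≠ 0 := natCast_ne_zero_of_mem_Ico (mem_Ico.mpr ⟨hw1, by omega⟩)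
  set k := ((c : ZMod p) / w).val
  have hH : Hquot p w (1 + k * p) = c := by
    rw [Hquot_one_add_mul, ZMod.natCast_zmod_val, mul_div_cancel₀ _ hw]
  have hk : k < p := ZMod.val_lt _
  have hlt : 1 + k * p < p ^ 2 := by nlinarith [hp.out.two_le]
  refine ⟨k, hk, ?_⟩
  rw [coeff_GoddPoly, sum_eq_zero fun l _ => if_neg (notMem_Nset_of_legendreSym_eq_one
    ((legendreSym_natCast_congr (by simp)).trans (legendreSym.at_one p))), add_zero,
    sum_eq_single c]
  · exact if_pos (mem_Dset.mpr ⟨hlt, coprime_one_add_mul k, hH⟩)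
  · intro l hl hne
    refine if_neg fun h => hne ?_
    rw [mem_Dset, hH] at h
    have hlp := (mem_Ico.mp (mem_filter.mp hl).1).2
    have hcp := (mem_Ico.mp (mem_filter.mp hc).1).2
    rw [ZMod.natCast_eq_natCast_iff', Nat.mod_eq_of_lt hlp, Nat.mod_eq_of_lt hcp] at h
    exact h.2.2.symm
  · exact fun h => absurd hc h

lemma not_cyclotomic_dvd_GoddPoly (hodd : p ≠ 2) (hw1 : 1 ≤ w) (hw2 : w ≤ p - 1) :
    ¬ cyclotomic (p ^ 2) (ZMod 2) ∣ GoddPoly p w := by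
  intro hdvd
  obtain ⟨k, hk, hcoeff⟩ := exists_coeff_GoddPoly_one_add_mul hodd hw1 hw2
  have := coeff_add_mul_eq_of_cyclotomic_dvd p 1 hdvd natDegree_GoddPoly_lt (m := 1) (j := k)
    (by rw [pow_one, pow_succ, pow_one]; nlinarith [hp.out.two_le])
  rw [pow_one, hcoeff, coeff_GoddPoly_one] at this
  exact one_ne_zero this

lemma exists_coprime_GoddEval_pow_ne_zero (hodd : p ≠ 2) (hw1 : 1 ≤ w) (hw2 : w ≤ p - 1)
    {β : AlgebraicClosure (ZMod 2)} (hβ : IsPrimitiveRoot β (p ^ 2)) :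
    ∃ n, n.Coprime p ∧ GoddEval p w (β ^ n) ≠ 0 := by
  by_contra! h
  refine not_cyclotomic_dvd_GoddPoly hodd hw1 hw2
    (cyclotomic_dvd_of_forall_isPrimitiveRoot hβ fun μ hμ => ?_)
  obtain ⟨i, -, rfl⟩ := hβ.eq_pow_of_pow_eq_one hμ.pow_eq_one
  rw [aeval_GoddPoly]
  exact h i ((Nat.coprime_pow_right_iff two_pos _ _).mp
    ((hβ.pow_iff_coprime (pow_pos hp.out.pos 2) i).mp hμ))

end GoddPoly

section Zeros

variable {p : ℕ} [hp : Fact p.Prime] {w : ℕ} {β : AlgebraicClosure (ZMod 2)}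

lemma twistedEval_zero_ne_zero_or (hodd : p ≠ 2) (hw1 : 1 ≤ w) (hw2 : w ≤ p - 1)
    (hβ : IsPrimitiveRoot β (p ^ 2)) (hH2 : Hquot p w 2 ≠ 0) :
    twistedEval p w β 0 1 ≠ 0 ∨ twistedEval p w β 0 (-1) ≠ 0 := by
  obtain ⟨n, hn, hne⟩ := exists_coprime_GoddEval_pow_ne_zero hodd hw1 hw2 hβ
  rw [GoddEval_pow hβ.pow_eq_one hn] at hne
  by_contra! h
  rcases legendreSym_eq_one_or_neg_one hn with hχ | hχ <;> rw [hχ] at hne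
  · exact hne (twistedEval_eq_zero_of_eq_zero hβ.pow_eq_one hodd hH2 h.1 _)
  · exact hne (twistedEval_eq_zero_of_eq_zero hβ.pow_eq_one hodd hH2 h.2 _)

lemma filter_GoddEval_pow_eq_zero (hodd : p ≠ 2) (hβ : IsPrimitiveRoot β (p ^ 2))
    (hH2 : Hquot p w 2 ≠ 0) :
    (range (p ^ 2)).filter (fun n => n.Coprime p ∧ GoddEval p w (β ^ n) = 0)
      = unitsWith p w fun _ ε => twistedEval p w β 0 ε = 0 := by
  ext n
  simp only [mem_filter, mem_unitsWith, mem_range]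
  refine and_congr_right fun _ => and_congr_right fun hn => ?_
  rw [GoddEval_pow hβ.pow_eq_one hn]
  exact ⟨fun h0 => twistedEval_eq_zero_of_eq_zero hβ.pow_eq_one hodd hH2 h0 0,
    fun h0 => twistedEval_eq_zero_of_eq_zero hβ.pow_eq_one hodd hH2 h0 _⟩

lemma GoddEval_pow_ne_zero_of_legendreSym_two (hodd : p ≠ 2) (hw1 : 1 ≤ w) (hw2 : w ≤ p - 1)
    (hβ : IsPrimitiveRoot β (p ^ 2)) (hH2 : Hquot p w 2 ≠ 0) (hχ2 : legendreSym p 2 = -1)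
    {n : ℕ} (hn : n.Coprime p) : GoddEval p w (β ^ n) ≠ 0 := by
  have hx := hβ.pow_eq_one
  intro hzero
  rw [GoddEval_pow hx hn] at hzero
  have hflip := twistedEval_Hquot_two_add (w := w) hx hodd (Hquot p w n) (legendreSym p n)
  rw [hzero, hχ2, neg_one_mul, zero_pow two_ne_zero] at hflip
  have hpos := twistedEval_eq_zero_of_eq_zero hx hodd hH2 hzero 0
  have hneg := twistedEval_eq_zero_of_eq_zero hx hodd hH2 hflip 0
  have := twistedEval_zero_ne_zero_or hodd hw1 hw2 hβ hH2
  rcases legendreSym_eq_one_or_neg_one hn with hχ | hχ <;> rw [hχ] at hpos hneg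
  · exact this.elim (absurd hpos) (absurd hneg)
  · rw [neg_neg] at hneg
    exact this.elim (absurd hneg) (absurd hpos)

end Zeros

/-- Lemma: zeros of `G^odd` at `β^n` with `n` in the unit group of `Z_{p²}`. -/
theorem GoddEval_zeros (p : ℕ) [hp : Fact p.Prime] (hodd : p ≠ 2)
    (w : ℕ) (hw1 : 1 ≤ w) (hw2 : w ≤ p - 1)
    (β : AlgebraicClosure (ZMod 2)) (hβ : IsPrimitiveRoot β (p ^ 2))
    (ℓ₀ : ℕ) (hℓ₀1 : 1 ≤ ℓ₀) (hℓ₀2 : ℓ₀ ≤ p - 1) :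
    (2 ∈ Qset p w (ℓ₀ : ZMod p) →
      ((Finset.range (p ^ 2)).filter
          (fun n => Nat.Coprime n p ∧ GoddEval p w (β ^ n) = 0)) = ∅ ∨
      ((Finset.range (p ^ 2)).filter
          (fun n => Nat.Coprime n p ∧ GoddEval p w (β ^ n) = 0)).card = (p ^ 2 - p) / 2) ∧
    (2 ∈ Nset p w (ℓ₀ : ZMod p) →
      ∀ n : ℕ, n < p ^ 2 → Nat.Coprime n p → GoddEval p w (β ^ n) ≠ 0) := by
  have hH2 (h2 : 2 ∈ Dset p w ℓ₀) : Hquot p w 2 ≠ 0 := by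
    rw [(mem_Dset.mp h2).2.2]
    exact natCast_ne_zero_of_mem_Ico (mem_Ico.mpr ⟨hℓ₀1, by omega⟩)
  refine ⟨fun h2 => ?_, fun h2 n _ hn => ?_⟩
  · have hH2' := hH2 (mem_filter.mp h2).1
    rw [filter_GoddEval_pow_eq_zero hodd hβ hH2']
    have := twistedEval_zero_ne_zero_or hodd hw1 hw2 hβ hH2'
    exact unitsWith_legendreSym_eq_empty_or_card hodd (by tauto)
  · obtain ⟨h2, hχ2⟩ := mem_filter.mp h2
    exact GoddEval_pow_ne_zero_of_legendreSym_two hodd hw1 hw2 hβ (hH2 h2)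
      (by simpa using hχ2) hn
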